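/- For the logistic function Λ(u) = exp(u)/(1+exp(u)) and any reals α, x₁, x₂, the expression Λ(α+x₂)·(1-Λ(α+x₁)) / [Λ(α+x₂)·(1-Λ(α+x₁)) + Λ(α+x₁)·(1-Λ(α+x₂))] equals Λ(x₂-x₁), and in particular does not depend on α. -/

import Mathlib

noncomputable def Lam (u : ℝ) : ℝ := Real.exp u / (1 + Real.exp u)

open Real

lemma one_add_exp_ne_zero (u : ℝ) : 1 + exp u ≠ 0 := by positivity

lemma one_sub_Lam (u : ℝ) : 1 - Lam u = 1 / (1 + exp u) := by
  rw [Lam, eq_div_iff (one_add_exp_ne_zero u), sub_mul, div_mul_cancel₀ _ (one_add_exp_ne_zero u)]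
  ring

lemma Lam_mul_one_sub_Lam (a b : ℝ) :
    Lam a * (1 - Lam b) = exp a / ((1 + exp a) * (1 + exp b)) := by
  rw [one_sub_Lam, Lam, div_mul_div_comm, mul_one]

lemma Lam_sub (a b : ℝ) : Lam (a - b) = exp a / (exp b + exp a) := by
  have hb : exp b ≠ 0 := (exp_pos b).ne'
  rw [Lam, exp_sub]
  field_simp

/-- The factor `(1 + exp a) * (1 + exp b)` common to both terms cancels from the ratio. -/
lemma Lam_mul_one_sub_Lam_div (a b : ℝ) :
    Lam a * (1 - Lam b) / (Lam a * (1 - Lam b) + Lam b * (1 - Lam a)) = Lam (a - b) := by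
  rw [Lam_mul_one_sub_Lam, Lam_mul_one_sub_Lam, mul_comm (1 + exp b), ← add_div,
    div_div_div_cancel_right₀ (mul_ne_zero (one_add_exp_ne_zero a) (one_add_exp_ne_zero b)),
    Lam_sub, add_comm]

theorem stmt_1 (α x₁ x₂ : ℝ) :
    Lam (α + x₂) * (1 - Lam (α + x₁)) /
      (Lam (α + x₂) * (1 - Lam (α + x₁)) + Lam (α + x₁) * (1 - Lam (α + x₂)))
      = Lam (x₂ - x₁) := by
  rw [Lam_mul_one_sub_Lam_div, add_sub_add_left_eq_sub]
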